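/- arXiv:1906.09630 — 3 statements merged into one kernel-verified Lean document; each statement's English description precedes it below -/
import Mathlib

section
/- Let G be a Lie group and let X be a multiplicative vector field on G. Then X is compatible with the inversion: for every g ∈ G, X_{g⁻¹} = − T_e L_{g⁻¹} ( T_g R_{g⁻¹} (X_g) ). -/
/-!
Evaluating multiplicativity at `(1, 1)` gives `X_1 = 2 X_1`, so `X_1 = 0`; evaluating it at
`(g, g⁻¹)` then gives `T L_g (X_{g⁻¹}) = - T R_{g⁻¹} (X_g)`, and `T L_{g⁻¹}` inverts `T L_g`.
-/

open scoped Manifold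

section

variable {𝕜 : Type*} [NontriviallyNormedField 𝕜]
  {E : Type*} [NormedAddCommGroup E] [NormedSpace 𝕜 E]
  {H : Type*} [TopologicalSpace H] {I : ModelWithCorners 𝕜 E H}
  {G : Type*} [TopologicalSpace G] [ChartedSpace H G]

def IsMultiplicativeVectorField [Monoid G] (X : ∀ g : G, TangentSpace I g) : Prop :=
  ∀ g h : G, X (g * h) =
    mfderiv I I (fun x => g * x) h (X h) + mfderiv I I (fun x => x * h) g (X g)

theorem IsMultiplicativeVectorField.apply_one [Monoid G] {X : ∀ g : G, TangentSpace I g}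
    (hX : IsMultiplicativeVectorField X) : X 1 = 0 := by
  have h := hX 1 1
  rw [show (fun x : G => 1 * x) = id from funext one_mul,
    show (fun x : G => x * 1) = id from funext mul_one, mfderiv_id, one_mul] at h
  simpa using h

theorem mfderiv_mul_left_inv_mul_left_apply [Group G] [ContMDiffMul I 1 G] (g h : G)
    (v : TangentSpace I h) :
    mfderiv I I (fun x => g⁻¹ * x) (g * h) (mfderiv I I (fun x => g * x) h v) = v := by
  have hid : (fun x : G => g⁻¹ * x) ∘ (fun x => g * x) = id := by
    funext x; simp
  have hcomp := mfderiv_comp_apply h (mdifferentiableAt_mul_left (I := I) (a := g⁻¹))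
    (mdifferentiableAt_mul_left (a := g)) v
  rw [hid, mfderiv_id] at hcomp
  exact hcomp.symm

end

theorem multiplicative_vector_field_compatible_with_inversion_general
    {E : Type*} [NormedAddCommGroup E] [NormedSpace ℝ E]
    {H : Type*} [TopologicalSpace H] {I : ModelWithCorners ℝ E H}
    {G : Type*} [TopologicalSpace G] [ChartedSpace H G] [Group G]
    [LieGroup I (⊤ : ℕ∞) G]
    (X : ∀ g : G, TangentSpace I g)
    (hX : ∀ g h : G, X (g * h) =
        mfderiv I I (fun x => g * x) h (X h) + mfderiv I I (fun x => x * h) g (X g)) :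
    ∀ g : G, X g⁻¹ =
      - mfderiv I I (fun x => g⁻¹ * x) (1 : G) (mfderiv I I (fun x => x * g⁻¹) g (X g)) := by
  intro g
  have hsum := hX g g⁻¹
  rw [mul_inv_cancel, IsMultiplicativeVectorField.apply_one hX] at hsum
  have hLg : mfderiv I I (fun x => g * x) g⁻¹ (X g⁻¹) = -mfderiv I I (fun x => x * g⁻¹) g (X g) :=
    eq_neg_of_add_eq_zero_left hsum.symm
  have hcancel := mfderiv_mul_left_inv_mul_left_apply g g⁻¹ (X g⁻¹)
  rw [hLg, map_neg, mul_inv_cancel] at hcancel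
  exact hcancel.symm

/-- A multiplicative vector field on a Lie group is compatible with
inversion: `X_{g⁻¹} = − T_e L_{g⁻¹} ( T_g R_{g⁻¹} (X_g) )`. -/
theorem multiplicative_vector_field_compatible_with_inversion
    {E : Type*} [NormedAddCommGroup E] [NormedSpace ℝ E] [FiniteDimensional ℝ E]
    {H : Type*} [TopologicalSpace H] {I : ModelWithCorners ℝ E H}
    {G : Type*} [TopologicalSpace G] [ChartedSpace H G] [Group G]
    [IsManifold I (⊤ : ℕ∞) G] [LieGroup I (⊤ : ℕ∞) G]
    (X : ∀ g : G, TangentSpace I g)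
    (hX : ∀ g h : G, X (g * h) =
        mfderiv I I (fun x => g * x) h (X h) + mfderiv I I (fun x => x * h) g (X g)) :
    ∀ g : G, X g⁻¹ =
      - mfderiv I I (fun x => g⁻¹ * x) (1 : G) (mfderiv I I (fun x => x * g⁻¹) g (X g)) :=
  multiplicative_vector_field_compatible_with_inversion_general X hX
end

section
/- Let B be a bialgebra over a commutative ring R and let v : B → R be an ε-derivation, i.e. v ∘ μ = v ⊗ ε + ε ⊗ v. Then the convolution X = id ⋆ v = μ ∘ (id ⊗ v) ∘ Δ (using R ⊗ B ≅ B) is a derivation of B which is left-invariant, i.e. X ∘ μ = μ ∘ (X ⊗ id + id ⊗ X) and (id ⊗ X) ∘ Δ = Δ ∘ X, and moreover ε ∘ X = v. -/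
/-!
In Sweedler notation `X b = ∑ b₁ v(b₂)`. Since `Δ` is multiplicative, `X (f g)` is the image of
`Δf Δg` under `a ⊗ b ↦ v(b) a`, and because `v` is an `ε`-derivation this slice map obeys a
Leibniz rule relative to `a ⊗ b ↦ ε(b) a`, which inverts `Δ` by the counit axiom. Left invariance
is coassociativity, `Δ (X b) = ∑ b₁ ⊗ b₂ v(b₃)`, and `ε ∘ X = v` is again the counit axiom.
-/

open TensorProduct

section

variable {R B : Type*} [CommRing R] [Ring B] [Bialgebra R B]

/-- A derivation of the bialgebra `B`: `X ∘ μ = μ ∘ (X ⊗ id + id ⊗ X)`. -/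
def IsDerivation (X : B →ₗ[R] B) : Prop :=
  X ∘ₗ LinearMap.mul' R B =
    LinearMap.mul' R B ∘ₗ
      (TensorProduct.map X LinearMap.id + TensorProduct.map LinearMap.id X)

/-- A left-invariant linear map of the bialgebra `B`: `(id ⊗ X) ∘ Δ = Δ ∘ X`. -/
def IsLeftInvariant (X : B →ₗ[R] B) : Prop :=
  TensorProduct.map LinearMap.id X ∘ₗ Coalgebra.comul = Coalgebra.comul ∘ₗ X

/-- An `ε`-derivation of `B` valued in `R`: `v(fg) = v(f)ε(g) + ε(f)v(g)`. -/
def IsEpsDerivation (v : B →ₗ[R] R) : Prop :=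
  ∀ f g : B, v (f * g) = v f * Coalgebra.counit g + Coalgebra.counit f * v g

/-- The convolution `id ⋆ v = μ ∘ (id ⊗ v) ∘ Δ` (using `B ⊗ R ≃ B`); the left translation
of `v`. -/
noncomputable def leftTranslation (v : B →ₗ[R] R) : B →ₗ[R] B :=
  (TensorProduct.rid R B).toLinearMap ∘ₗ
    TensorProduct.map LinearMap.id v ∘ₗ Coalgebra.comul

open Coalgebra (comul counit)
open TensorProduct (rid lid assoc)

theorem leftTranslation_eq (v : B →ₗ[R] R) :
    leftTranslation v = (rid R B).toLinearMap ∘ₗ v.lTensor B ∘ₗ comul := rfl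

theorem counit_comp_leftTranslation (v : B →ₗ[R] R) : counit ∘ₗ leftTranslation v = v := by
  have counit_comp_rid_lTensor : counit ∘ₗ (rid R B).toLinearMap ∘ₗ v.lTensor B =
      v ∘ₗ (lid R B).toLinearMap ∘ₗ counit.rTensor B := by
    ext x y
    simp [mul_comm]
  rw [leftTranslation_eq]
  ext b
  simpa using congr($counit_comp_rid_lTensor (comul b))

theorem isLeftInvariant_leftTranslation (v : B →ₗ[R] R) :
    IsLeftInvariant (leftTranslation v) := by
  have rid_lTensor_rTensor : (rid R (B ⊗[R] B)).toLinearMap ∘ₗ v.lTensor _ ∘ₗ comul.rTensor B =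
      comul ∘ₗ (rid R B).toLinearMap ∘ₗ v.lTensor B := by
    ext x y
    simp
  have lTensor_rid_lTensor : ((rid R B).toLinearMap ∘ₗ v.lTensor B).lTensor B =
      (rid R (B ⊗[R] B)).toLinearMap ∘ₗ v.lTensor _ ∘ₗ (assoc R B B B).symm := by
    ext x y z
    simp
  ext b
  calc (leftTranslation v).lTensor B (comul b)
      = ((rid R B).toLinearMap ∘ₗ v.lTensor B).lTensor B
          ((comul (R := R)).lTensor B (comul b)) := by
        rw [leftTranslation_eq, ← LinearMap.comp_assoc, LinearMap.lTensor_comp_apply]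
    _ = rid R (B ⊗[R] B) (v.lTensor _ ((assoc R B B B).symm
          ((comul (R := R)).lTensor B (comul b)))) := congr($lTensor_rid_lTensor _)
    _ = rid R (B ⊗[R] B) (v.lTensor _ ((comul (R := R)).rTensor B (comul b))) := by
        rw [Coalgebra.coassoc_symm_apply]
    _ = comul (leftTranslation v b) := congr($rid_lTensor_rTensor (comul b))

theorem IsEpsDerivation.rid_lTensor_mul {A : Type*} [Semiring A] [Algebra R A]
    {v : B →ₗ[R] R} (hv : IsEpsDerivation v) (x y : A ⊗[R] B) :
    rid R A (v.lTensor A (x * y)) =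
      rid R A (v.lTensor A x) * rid R A (counit.lTensor A y) +
        rid R A (counit.lTensor A x) * rid R A (v.lTensor A y) := by
  let slice (w : B →ₗ[R] R) : A ⊗[R] B →ₗ[R] A := (rid R A).toLinearMap ∘ₗ w.lTensor A
  have h : (LinearMap.mul R (A ⊗[R] B)).compr₂ (slice v) =
      (LinearMap.mul R A).compl₁₂ (slice v) (slice counit) +
        (LinearMap.mul R A).compl₁₂ (slice counit) (slice v) := by
    ext a b a' b'
    simp only [AlgebraTensorModule.curry_apply, LinearMap.restrictScalars_self, curry_apply,
      LinearMap.compr₂_apply, LinearMap.mul_apply_apply, Algebra.TensorProduct.tmul_mul_tmul,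
      LinearMap.coe_comp, LinearEquiv.coe_coe, Function.comp_apply, LinearMap.lTensor_tmul,
      rid_tmul, LinearMap.add_apply, LinearMap.compl₁₂_apply, map_smul, LinearMap.smul_apply, slice]
    rw [hv, add_smul, mul_comm (v b), mul_comm (counit b), mul_smul, mul_smul]
  exact congr($h x y)

theorem isDerivation_leftTranslation {v : B →ₗ[R] R} (hv : IsEpsDerivation v) :
    IsDerivation (leftTranslation v) := by
  ext f g
  simp [leftTranslation_eq, Bialgebra.comul_mul, hv.rid_lTensor_mul,
    Coalgebra.lTensor_counit_comul]

/-- If `v : B → R` is an `ε`-derivation, then `X = id ⋆ v` is a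
left-invariant derivation of `B` with `ε ∘ X = v`. -/
theorem leftTranslation_is_left_invariant_derivation
    (v : B →ₗ[R] R) (hv : IsEpsDerivation v) :
    IsDerivation (leftTranslation v) ∧ IsLeftInvariant (leftTranslation v) ∧
      Coalgebra.counit ∘ₗ leftTranslation v = v :=
  ⟨isDerivation_leftTranslation hv, isLeftInvariant_leftTranslation v,
    counit_comp_leftTranslation v⟩

end
end

section
/- Let B be a bialgebra over a commutative ring R and let v : B → R be an ε-derivation. Then the linear map X = id ⋆ v − v ⋆ id (difference of left and right translations of v) is multiplicative: (X ⊗ id + id ⊗ X) ∘ Δ = Δ ∘ X. Together with the fact that left and right translations of ε-derivations are derivations of the multiplication, X is a multiplicative derivation of B. -/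
open TensorProduct

section

variable {R B : Type*} [CommRing R] [Ring B] [Bialgebra R B]

/-- A multiplicative linear map of `B`: `(X ⊗ id + id ⊗ X) ∘ Δ = Δ ∘ X`. -/
def IsMultiplicative (X : B →ₗ[R] B) : Prop :=
  (TensorProduct.map X LinearMap.id + TensorProduct.map LinearMap.id X) ∘ₗ
      Coalgebra.comul = Coalgebra.comul ∘ₗ X

/-- The right translation `v ⋆ id = μ ∘ (v ⊗ id) ∘ Δ` (using `R ⊗ B ≃ B`). -/
noncomputable def rightTranslation (v : B →ₗ[R] R) : B →ₗ[R] B :=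
  (TensorProduct.lid R B).toLinearMap ∘ₗ
    TensorProduct.map v LinearMap.id ∘ₗ Coalgebra.comul

/- ### Auxiliary lemmas -/

variable {ι : Type*}

lemma leftTranslation_eq_s13 (v : B →ₗ[R] R) {x : B} (s : Finset ι) (l r : ι → B)
    (h : ∑ i ∈ s, l i ⊗ₜ[R] r i = Coalgebra.comul x) :
    leftTranslation v x = ∑ i ∈ s, v (r i) • l i := by
  simp [leftTranslation, ← h, map_sum]

lemma rightTranslation_eq (v : B →ₗ[R] R) {x : B} (s : Finset ι) (l r : ι → B)
    (h : ∑ i ∈ s, l i ⊗ₜ[R] r i = Coalgebra.comul x) :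
    rightTranslation v x = ∑ i ∈ s, v (l i) • r i := by
  simp [rightTranslation, ← h, map_sum]

lemma eq_sum_counit_right {x : B} (s : Finset ι) (l r : ι → B)
    (h : ∑ i ∈ s, l i ⊗ₜ[R] r i = Coalgebra.comul x) :
    x = ∑ i ∈ s, Coalgebra.counit (R := R) (r i) • l i := by
  have := congrArg ((TensorProduct.rid R B) ∘ (LinearMap.lTensor B (Coalgebra.counit (R := R)))) h
  simp only [Function.comp_apply, map_sum, LinearMap.lTensor_tmul, rid_tmul,
    Coalgebra.lTensor_counit_comul, one_smul] at this
  exact this.symm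

lemma eq_sum_counit_left {x : B} (s : Finset ι) (l r : ι → B)
    (h : ∑ i ∈ s, l i ⊗ₜ[R] r i = Coalgebra.comul x) :
    x = ∑ i ∈ s, Coalgebra.counit (R := R) (l i) • r i := by
  have := congrArg ((TensorProduct.lid R B) ∘ (LinearMap.rTensor B (Coalgebra.counit (R := R)))) h
  simp only [Function.comp_apply, map_sum, LinearMap.rTensor_tmul, lid_tmul,
    Coalgebra.rTensor_counit_comul, one_smul] at this
  exact this.symm

lemma comul_mul_rep {f g : B} {ιf ιg : Type*} (sf : Finset ιf) (lf rf : ιf → B)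
    (hf : ∑ i ∈ sf, lf i ⊗ₜ[R] rf i = Coalgebra.comul f)
    (sg : Finset ιg) (lg rg : ιg → B)
    (hg : ∑ j ∈ sg, lg j ⊗ₜ[R] rg j = Coalgebra.comul g) :
    ∑ i ∈ sf, ∑ j ∈ sg, (lf i * lg j) ⊗ₜ[R] (rf i * rg j) = Coalgebra.comul (f * g) := by
  rw [Bialgebra.comul_mul, ← hf, ← hg, Finset.sum_mul_sum]
  simp [Algebra.TensorProduct.tmul_mul_tmul]

lemma leftTranslation_mul (v : B →ₗ[R] R) (hv : IsEpsDerivation v) (f g : B) :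
    leftTranslation v (f * g) = leftTranslation v f * g + f * leftTranslation v g := by
  obtain ⟨Sf, hSf⟩ := TensorProduct.exists_finset (R := R) (Coalgebra.comul f)
  obtain ⟨Sg, hSg⟩ := TensorProduct.exists_finset (R := R) (Coalgebra.comul g)
  set sf := Sf with hsf; set sg := Sg with hsg
  set lf : B × B → B := Prod.fst with hlf; set rf : B × B → B := Prod.snd with hrf2
  set lg : B × B → B := Prod.fst with hlg; set rg : B × B → B := Prod.snd with hrg2
  have hf : ∑ i ∈ sf, lf i ⊗ₜ[R] rf i = Coalgebra.comul f := hSf.symm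
  have hg : ∑ j ∈ sg, lg j ⊗ₜ[R] rg j = Coalgebra.comul g := hSg.symm
  rw [leftTranslation_eq_s13 v sf lf rf hf, leftTranslation_eq_s13 v sg lg rg hg]
  rw [show leftTranslation v (f*g) = ∑ i ∈ sf, ∑ j ∈ sg,
        v (rf i * rg j) • (lf i * lg j) by
    have := leftTranslation_eq_s13 v (sf ×ˢ sg) (fun p => lf p.1 * lg p.2)
      (fun p => rf p.1 * rg p.2)
      (by rw [Finset.sum_product]; exact comul_mul_rep sf lf rf hf sg lg rg hg)
    rw [this, Finset.sum_product]]
  nth_rewrite 1 [eq_sum_counit_right sg lg rg hg]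
  rw [eq_sum_counit_right sf lf rf hf]
  rw [Finset.sum_mul_sum, Finset.sum_mul_sum]
  rw [← Finset.sum_add_distrib]
  refine Finset.sum_congr rfl fun i _ => ?_
  rw [← Finset.sum_add_distrib]
  refine Finset.sum_congr rfl fun j _ => ?_
  rw [hv, add_smul, smul_mul_smul_comm, smul_mul_smul_comm]

lemma rightTranslation_mul (v : B →ₗ[R] R) (hv : IsEpsDerivation v) (f g : B) :
    rightTranslation v (f * g) = rightTranslation v f * g + f * rightTranslation v g := by
  obtain ⟨Sf, hSf⟩ := TensorProduct.exists_finset (R := R) (Coalgebra.comul f)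
  obtain ⟨Sg, hSg⟩ := TensorProduct.exists_finset (R := R) (Coalgebra.comul g)
  set sf := Sf with hsf; set sg := Sg with hsg
  set lf : B × B → B := Prod.fst with hlf; set rf : B × B → B := Prod.snd with hrf2
  set lg : B × B → B := Prod.fst with hlg; set rg : B × B → B := Prod.snd with hrg2
  have hf : ∑ i ∈ sf, lf i ⊗ₜ[R] rf i = Coalgebra.comul f := hSf.symm
  have hg : ∑ j ∈ sg, lg j ⊗ₜ[R] rg j = Coalgebra.comul g := hSg.symm
  rw [rightTranslation_eq v sf lf rf hf, rightTranslation_eq v sg lg rg hg]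
  rw [show rightTranslation v (f*g) = ∑ i ∈ sf, ∑ j ∈ sg,
        v (lf i * lg j) • (rf i * rg j) by
    have := rightTranslation_eq v (sf ×ˢ sg) (fun p => lf p.1 * lg p.2)
      (fun p => rf p.1 * rg p.2)
      (by rw [Finset.sum_product]; exact comul_mul_rep sf lf rf hf sg lg rg hg)
    rw [this, Finset.sum_product]]
  nth_rewrite 1 [eq_sum_counit_left sg lg rg hg]
  rw [eq_sum_counit_left sf lf rf hf]
  rw [Finset.sum_mul_sum, Finset.sum_mul_sum]
  rw [← Finset.sum_add_distrib]
  refine Finset.sum_congr rfl fun i _ => ?_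
  rw [← Finset.sum_add_distrib]
  refine Finset.sum_congr rfl fun j _ => ?_
  rw [hv, add_smul, smul_mul_smul_comm, smul_mul_smul_comm]

/-- If `v : B → R` is an `ε`-derivation, then
`X = id ⋆ v − v ⋆ id` is a multiplicative derivation of `B`. -/
theorem leftTranslation_sub_rightTranslation_is_multiplicative_derivation
    (v : B →ₗ[R] R) (hv : IsEpsDerivation v) :
    IsMultiplicative (leftTranslation v - rightTranslation v) ∧
      IsDerivation (leftTranslation v - rightTranslation v) := by
  constructor
  · -- multiplicativity
    apply LinearMap.ext; intro x
    obtain ⟨S, hS⟩ := TensorProduct.exists_finset (R := R) (Coalgebra.comul x)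
    choose TL hTL using fun p : B × B =>
      TensorProduct.exists_finset (R := R) (Coalgebra.comul p.1)
    choose TR hTR using fun p : B × B =>
      TensorProduct.exists_finset (R := R) (Coalgebra.comul p.2)
    have hco : (∑ p ∈ S, ∑ q ∈ TL p, (q.1 : B) ⊗ₜ[R] (q.2 ⊗ₜ[R] p.2))
        = ∑ p ∈ S, ∑ q ∈ TR p, (p.1 : B) ⊗ₜ[R] (q.1 ⊗ₜ[R] q.2) := by
      have h1 := Coalgebra.coassoc_apply (R := R) x
      rw [hS] at h1
      simp only [map_sum, LinearMap.rTensor_tmul, LinearMap.lTensor_tmul] at h1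
      simp only [hTL, hTR, sum_tmul, tmul_sum, map_sum, assoc_tmul] at h1
      exact h1
    have hA : ∑ p ∈ S, ∑ q ∈ TL p, v q.2 • ((q.1 : B) ⊗ₜ[R] p.2)
        = ∑ p ∈ S, ∑ q ∈ TR p, v q.1 • ((p.1 : B) ⊗ₜ[R] q.2) := by
      have := congrArg (TensorProduct.map (LinearMap.id : B →ₗ[R] B)
        ((TensorProduct.lid R B).toLinearMap ∘ₗ TensorProduct.map v LinearMap.id)) hco
      simpa only [map_sum, map_tmul, LinearMap.coe_comp, LinearEquiv.coe_coe,
        Function.comp_apply, lid_tmul, LinearMap.id_coe, id_eq, tmul_smul] using this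
    have hB : ∑ p ∈ S, ∑ q ∈ TL p, v q.1 • ((q.2 : B) ⊗ₜ[R] p.2)
        = ∑ p ∈ S, ∑ q ∈ TR p, v p.1 • ((q.1 : B) ⊗ₜ[R] q.2) := by
      have := congrArg ((TensorProduct.lid R (B ⊗[R] B)).toLinearMap ∘ₗ
        TensorProduct.map v LinearMap.id) hco
      simpa only [map_sum, LinearMap.coe_comp, LinearEquiv.coe_coe, Function.comp_apply,
        map_tmul, lid_tmul, LinearMap.id_coe, id_eq] using this
    have hC : ∑ p ∈ S, ∑ q ∈ TL p, v p.2 • ((q.1 : B) ⊗ₜ[R] q.2)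
        = ∑ p ∈ S, ∑ q ∈ TR p, v q.2 • ((p.1 : B) ⊗ₜ[R] q.1) := by
      have := congrArg (TensorProduct.map (LinearMap.id : B →ₗ[R] B)
        ((TensorProduct.rid R B).toLinearMap ∘ₗ TensorProduct.map LinearMap.id v)) hco
      simpa only [map_sum, map_tmul, LinearMap.coe_comp, LinearEquiv.coe_coe,
        Function.comp_apply, rid_tmul, LinearMap.id_coe, id_eq, tmul_smul] using this
    have hX1 : ∀ p : B × B, (leftTranslation v - rightTranslation v) p.1
        = ∑ q ∈ TL p, (v q.2 • q.1 - v q.1 • q.2) := by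
      intro p
      rw [LinearMap.sub_apply, leftTranslation_eq_s13 v (TL p) _ _ (hTL p).symm,
        rightTranslation_eq v (TL p) _ _ (hTL p).symm, ← Finset.sum_sub_distrib]
    have hX2 : ∀ p : B × B, (leftTranslation v - rightTranslation v) p.2
        = ∑ q ∈ TR p, (v q.2 • q.1 - v q.1 • q.2) := by
      intro p
      rw [LinearMap.sub_apply, leftTranslation_eq_s13 v (TR p) _ _ (hTR p).symm,
        rightTranslation_eq v (TR p) _ _ (hTR p).symm, ← Finset.sum_sub_distrib]
    have hXx : (leftTranslation v - rightTranslation v) x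
        = ∑ p ∈ S, (v p.2 • p.1 - v p.1 • p.2) := by
      rw [LinearMap.sub_apply, leftTranslation_eq_s13 v S _ _ hS.symm,
        rightTranslation_eq v S _ _ hS.symm, ← Finset.sum_sub_distrib]
    simp only [LinearMap.comp_apply, LinearMap.add_apply, hXx, hS, map_sum, map_tmul,
      LinearMap.id_coe, id_eq, map_sub, map_smul, hX1, hX2, hTL, hTR,
      Finset.smul_sum, sum_tmul, tmul_sum, smul_tmul', tmul_smul, sub_tmul, tmul_sub,
      Finset.sum_sub_distrib, Finset.sum_add_distrib]
    simp only [smul_tmul'] at hA hB hC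
    rw [hA, hB, ← hC]
    abel
  · -- derivation property
    apply TensorProduct.ext'
    intro f g
    simp only [LinearMap.comp_apply, LinearMap.add_apply, map_tmul, LinearMap.mul'_apply,
      LinearMap.id_coe, id_eq, map_add, LinearMap.sub_apply]
    rw [leftTranslation_mul v hv, rightTranslation_mul v hv]
    simp only [sub_mul, mul_sub]
    abel

end
end
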